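/- The equality function EQ : {0,1}^n × {0,1}^n → {0,1}, EQ(x,y) = 1 if and only if x = y, can be computed in the garden-hose model with 3n + 1 pipes: GH(EQ) ≤ 3n + 1. -/

import Mathlib

/-- A partial matching on the vertex type `V`, encoded by a partner function:
`m i = some j` means that there is an edge between `i` and `j`;
the graph `{ {i,j} | m i = some j }` then has maximum degree at most `1`
and no self-loops. -/
def IsPartialMatching {V : Type*} (m : V → Option V) : Prop :=
  ∀ i j, m i = some j → i ≠ j ∧ m j = some i

/-- The position of the water in a garden-hose game with `s` pipes:
`atAlice i` (resp. `atBob i`) means the water has just arrived at Alice's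
(resp. Bob's) end of pipe `i`; `exitA` / `exitB` mean the water has exited
on Alice's / Bob's side, i.e. the maximal path starting at the tap has ended
in `A∘` / in `B`. -/
inductive GHState (s : ℕ) where
  | atAlice : Fin s → GHState s
  | atBob : Fin s → GHState s
  | exitA : GHState s
  | exitB : GHState s
  deriving DecidableEq

/-- Vertex `k` of `A∘ = {0, 1, ..., s}` viewed as a pipe: vertex `0` is the water
tap (no pipe), and vertex `i + 1` is Alice's end of pipe `i`. -/
def toPipe {s : ℕ} (k : Fin (s + 1)) : Option (Fin s) :=
  if h : (k : ℕ) = 0 then none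
  else some ⟨(k : ℕ) - 1, by have := k.isLt; omega⟩

/-- One step of the water flow, given Alice's connections `a` on `A∘ = {0,...,s}`
and Bob's connections `b` on `B = {1,...,s}` (indexed by pipes `Fin s`). -/
def ghStep {s : ℕ} (a : Fin (s + 1) → Option (Fin (s + 1)))
    (b : Fin s → Option (Fin s)) : GHState s → GHState s
  | GHState.atAlice i =>
    match a i.succ with
    | none => GHState.exitA
    | some k =>
      match toPipe k with
      | none => GHState.exitA
      | some p => GHState.atBob p
  | GHState.atBob i =>
    match b i with
    | none => GHState.exitB
    | some j => GHState.atAlice j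
  | GHState.exitA => GHState.exitA
  | GHState.exitB => GHState.exitB

/-- The start of the water flow: the tap (vertex `0` of `A∘`) is connected by
Alice to at most one pipe. -/
def ghStart {s : ℕ} (a : Fin (s + 1) → Option (Fin (s + 1))) : GHState s :=
  match a 0 with
  | none => GHState.exitA
  | some k =>
    match toPipe k with
    | none => GHState.exitA
    | some p => GHState.atBob p

/-- The endpoint of the maximal path `π(x,y)` starting at the tap: since the graph
has maximum degree `2` and the path is simple, it is reached after at most
`2s + 2` steps. -/
def ghResult {s : ℕ} (a : Fin (s + 1) → Option (Fin (s + 1)))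
    (b : Fin s → Option (Fin s)) : GHState s :=
  (ghStep a b)^[2 * s + 2] (ghStart a)

/-- A garden-hose game of size `s` on inputs `{0,1}^n × {0,1}^n`: for every input
`x` Alice chooses a partial matching `EA x` on `A∘ = {0,1,…,s}` and for every
input `y` Bob chooses a partial matching `EB y` on `B = {1,…,s}`. -/
structure GHGame (n s : ℕ) where
  EA : (Fin n → Bool) → Fin (s + 1) → Option (Fin (s + 1))
  EB : (Fin n → Bool) → Fin s → Option (Fin s)
  matchA : ∀ x, IsPartialMatching (EA x)
  matchB : ∀ y, IsPartialMatching (EB y)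

/-- Where the water exits on input `(x, y)`. -/
def GHGame.run {n s : ℕ} (G : GHGame n s) (x y : Fin n → Bool) : GHState s :=
  ghResult (G.EA x) (G.EB y)

/-- The game `G` computes `f` if for all inputs the maximal path from the tap ends
in `A∘` whenever `f x y = 0` (water exits on Alice's side) and in `B` whenever
`f x y = 1` (water exits on Bob's side). -/
def GHGame.Computes {n s : ℕ} (G : GHGame n s)
    (f : (Fin n → Bool) → (Fin n → Bool) → Bool) : Prop :=
  ∀ x y, G.run x y = if f x y then GHState.exitB else GHState.exitA

/-- The garden-hose complexity of `f`: the minimal number of pipes of a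
garden-hose game computing `f`. -/
noncomputable def GH {n : ℕ} (f : (Fin n → Bool) → (Fin n → Bool) → Bool) : ℕ :=
  sInf {s : ℕ | ∃ G : GHGame n s, G.Computes f}

/-- The equality function: `EQ x y = 1` iff `x = y`. -/
def EQfun (n : ℕ) (x y : Fin n → Bool) : Bool := decide (x = y)


/-! As long as the bits agree, the water reaches Bob through the pipe of the current bit that
carries Alice's value, comes back through the return pipe of that bit, and Alice sends it on into
the pipe of her next bit; Bob leaves the pipe of the last bit open. At the first disagreement `i`
the water reaches Bob through his wrong pipe of bit `i`, the one carrying the other value. Bob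
pairs his wrong pipes of the bits `2k` and `2k + 1`, and Alice leaves her wrong pipes open, so
the water exits at Alice through the partner pipe, unless the partner bit is `i + 1` and also
disagrees; then Alice sends it back through the return pipe of bit `i`, which Bob joins to the
pipe of bit `i` that Alice leaves open. Pairing the wrong pipes is what keeps the count at three
pipes per bit. -/

def finRestrict (m : ℕ) (f : ℕ → Option ℕ) : Fin m → Option (Fin m) :=
  fun v => (f v).bind fun w => if h : w < m then some ⟨w, h⟩ else none

theorem finRestrict_of_eq_some {m v w : ℕ} {f : ℕ → Option ℕ} (hv : v < m) (hw : w < m)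
    (h : f v = some w) : finRestrict m f ⟨v, hv⟩ = some ⟨w, hw⟩ := by
  simp [finRestrict, h, hw]

theorem finRestrict_of_eq_none {m v : ℕ} {f : ℕ → Option ℕ} (hv : v < m) (h : f v = none) :
    finRestrict m f ⟨v, hv⟩ = none := by
  simp [finRestrict, h]

theorem finRestrict_eq_some {m : ℕ} {f : ℕ → Option ℕ} {v w : Fin m}
    (h : finRestrict m f v = some w) : f v = some w := by
  obtain ⟨k, hk, hkw⟩ := Option.bind_eq_some_iff.mp h
  split_ifs at hkw with hkm
  cases hkw
  exact hk

theorem IsPartialMatching.finRestrict {m : ℕ} {f : ℕ → Option ℕ}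
    (hf : IsPartialMatching f) : IsPartialMatching (finRestrict m f) := by
  intro v w h
  obtain ⟨hne, hback⟩ := hf v w (finRestrict_eq_some h)
  exact ⟨fun e => hne (congrArg Fin.val e), finRestrict_of_eq_some w.isLt v.isLt hback⟩

theorem toPipe_succ {s : ℕ} (k : Fin s) : toPipe k.succ = some k := by
  simp [toPipe]

theorem ghResult_eq_of_iterate_eq {s m : ℕ} {a : Fin (s + 1) → Option (Fin (s + 1))}
    {b : Fin s → Option (Fin s)} {st : GHState s} (hm : m ≤ 2 * s + 2)
    (h : (ghStep a b)^[m] (ghStart a) = st) (hst : ghStep a b st = st) :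
    ghResult a b = st := by
  rw [ghResult, ← Nat.sub_add_cancel hm, Function.iterate_add_apply, h,
    Function.iterate_fixed hst]

section Simulation

variable {s : ℕ} {na nb : ℕ → Option ℕ}

theorem ghStart_finRestrict {q : ℕ} (hq : q < s) (h : na 0 = some (q + 1)) :
    ghStart (finRestrict (s + 1) na) = GHState.atBob ⟨q, hq⟩ := by
  have h0 : finRestrict (s + 1) na 0 = some (Fin.succ ⟨q, hq⟩) :=
    finRestrict_of_eq_some (Nat.succ_pos s) (Nat.succ_lt_succ hq) h
  simp only [ghStart, h0, toPipe_succ]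

theorem ghStep_atAlice_finRestrict {p q : ℕ} (hp : p < s) (hq : q < s)
    (h : na (p + 1) = some (q + 1)) :
    ghStep (finRestrict (s + 1) na) (finRestrict s nb) (GHState.atAlice ⟨p, hp⟩) =
      GHState.atBob ⟨q, hq⟩ := by
  have hp' : finRestrict (s + 1) na (Fin.succ ⟨p, hp⟩) = some (Fin.succ ⟨q, hq⟩) :=
    finRestrict_of_eq_some (Nat.succ_lt_succ hp) (Nat.succ_lt_succ hq) h
  simp only [ghStep, hp', toPipe_succ]

theorem ghStep_atAlice_finRestrict_of_eq_none {p : ℕ} (hp : p < s) (h : na (p + 1) = none) :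
    ghStep (finRestrict (s + 1) na) (finRestrict s nb) (GHState.atAlice ⟨p, hp⟩) =
      GHState.exitA := by
  have hp' : finRestrict (s + 1) na (Fin.succ ⟨p, hp⟩) = none :=
    finRestrict_of_eq_none (Nat.succ_lt_succ hp) h
  simp only [ghStep, hp']

theorem ghStep_atBob_finRestrict {p q : ℕ} (hp : p < s) (hq : q < s) (h : nb p = some q) :
    ghStep (finRestrict (s + 1) na) (finRestrict s nb) (GHState.atBob ⟨p, hp⟩) =
      GHState.atAlice ⟨q, hq⟩ := by
  simp only [ghStep, finRestrict_of_eq_some hp hq h]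

theorem ghStep_atBob_finRestrict_of_eq_none {p : ℕ} (hp : p < s) (h : nb p = none) :
    ghStep (finRestrict (s + 1) na) (finRestrict s nb) (GHState.atBob ⟨p, hp⟩) =
      GHState.exitB := by
  simp only [ghStep, finRestrict_of_eq_none hp h]

theorem ghResult_finRestrict_eq_exitB {m p : ℕ} (hm : m + 1 ≤ 2 * s + 2) (hp : p < s)
    (h : (ghStep (finRestrict (s + 1) na) (finRestrict s nb))^[m]
      (ghStart (finRestrict (s + 1) na)) = GHState.atBob ⟨p, hp⟩)
    (hnb : nb p = none) :
    ghResult (finRestrict (s + 1) na) (finRestrict s nb) = GHState.exitB :=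
  ghResult_eq_of_iterate_eq hm
    (by rw [Function.iterate_succ_apply', h, ghStep_atBob_finRestrict_of_eq_none hp hnb]) rfl

theorem ghResult_finRestrict_eq_exitA {m p q : ℕ} (hm : m + 2 ≤ 2 * s + 2) (hp : p < s)
    (hq : q < s)
    (h : (ghStep (finRestrict (s + 1) na) (finRestrict s nb))^[m]
      (ghStart (finRestrict (s + 1) na)) = GHState.atBob ⟨p, hp⟩)
    (hnb : nb p = some q) (hna : na (q + 1) = none) :
    ghResult (finRestrict (s + 1) na) (finRestrict s nb) = GHState.exitA :=
  ghResult_eq_of_iterate_eq hm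
    (by rw [Function.iterate_succ_apply', Function.iterate_succ_apply', h,
      ghStep_atBob_finRestrict hp hq hnb, ghStep_atAlice_finRestrict_of_eq_none hq hna]) rfl

end Simulation

/- Pipe `2i + b` carries the value `b` of bit `i < n` and pipe `2n + i` is the return pipe of
bit `i`; the return pipe `3n - 1` of the last bit takes Bob's unpaired wrong pipe when `n` is
odd, and pipe `3n` is needed only for `n = 0`. Alice's vertex `p + 1` is her end of pipe `p`. -/

def alicePartner (n : ℕ) (c : ℕ → ℕ) : ℕ → Option ℕ := fun v =>
  if v = 0 then some (c 0 + 1)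
  else if v = c 0 + 1 then some 0
  else if 2 * n < v ∧ v < 3 * n then some (2 * (v - 2 * n) + c (v - 2 * n) + 1)
  else if 0 < (v - 1) / 2 ∧ (v - 1) / 2 < n ∧ (v - 1) % 2 = c ((v - 1) / 2) then
    some (2 * n + (v - 1) / 2)
  else none

def bobPartner (n : ℕ) (c : ℕ → ℕ) : ℕ → Option ℕ := fun v =>
  if v / 2 + 1 < n ∧ v % 2 = c (v / 2) then some (2 * n + v / 2)
  else if 2 * n ≤ v ∧ v + 1 < 3 * n then some (2 * (v - 2 * n) + c (v - 2 * n))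
  else if v / 2 < n ∧ v % 2 = 1 - c (v / 2) then
    if v / 2 % 2 = 1 then some (2 * (v / 2 - 1) + (1 - c (v / 2 - 1)))
    else if v / 2 + 1 < n then some (2 * (v / 2 + 1) + (1 - c (v / 2 + 1)))
    else some (3 * n - 1)
  else if v = 3 * n - 1 ∧ n % 2 = 1 then some (2 * (n - 1) + (1 - c (n - 1)))
  else none

section Partners

variable {n : ℕ} {c : ℕ → ℕ}

theorem alicePartner_zero : alicePartner n c 0 = some (c 0 + 1) := by
  simp [alicePartner]

theorem alicePartner_first : alicePartner n c (c 0 + 1) = some 0 := by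
  simp [alicePartner]

variable (hc : ∀ i, c i ≤ 1)
include hc

theorem alicePartner_return {j : ℕ} (hj : 0 < j) (hjn : j < n) :
    alicePartner n c (2 * n + j) = some (2 * j + c j + 1) := by
  have := hc 0
  simp only [alicePartner, Nat.add_sub_cancel_left]
  split_ifs <;> first | rfl | omega

theorem alicePartner_bit {j : ℕ} (hj : 0 < j) (hjn : j < n) :
    alicePartner n c (2 * j + c j + 1) = some (2 * n + j) := by
  have := hc 0
  have := hc j
  have hdiv : (2 * j + c j + 1 - 1) / 2 = j := by omega
  have hmod : (2 * j + c j + 1 - 1) % 2 = c j := by omega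
  simp only [alicePartner, hdiv, hmod, and_true]
  split_ifs <;> first | rfl | contradiction | omega

theorem alicePartner_wrong {j : ℕ} (hjn : j < n) :
    alicePartner n c (2 * j + (1 - c j) + 1) = none := by
  have := hc 0
  have := hc j
  have hdiv : (2 * j + (1 - c j) + 1 - 1) / 2 = j := by omega
  have hmod : (2 * j + (1 - c j) + 1 - 1) % 2 = 1 - c j := by omega
  simp only [alicePartner, hdiv, hmod]
  obtain rfl | hj := j.eq_zero_or_pos <;> split_ifs <;> first | rfl | omega

theorem alicePartner_last_return (hn : 0 < n) : alicePartner n c (3 * n) = none := by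
  have := hc 0
  have := hc ((3 * n - 1) / 2)
  simp only [alicePartner]
  split_ifs <;> first | rfl | omega

theorem bobPartner_bit {j : ℕ} (hjn : j + 1 < n) :
    bobPartner n c (2 * j + c j) = some (2 * n + j) := by
  have := hc j
  have hdiv : (2 * j + c j) / 2 = j := by omega
  have hmod : (2 * j + c j) % 2 = c j := by omega
  simp only [bobPartner, hdiv, hmod, and_true]
  split_ifs; rfl

theorem bobPartner_return {j : ℕ} (hjn : j + 1 < n) :
    bobPartner n c (2 * n + j) = some (2 * j + c j) := by
  have := hc ((2 * n + j) / 2)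
  simp only [bobPartner, Nat.add_sub_cancel_left]
  split_ifs <;> first | rfl | omega

theorem bobPartner_last_bit : bobPartner n c (2 * (n - 1) + c (n - 1)) = none := by
  have := hc (n - 1)
  have hdiv : (2 * (n - 1) + c (n - 1)) / 2 = n - 1 := by omega
  have hmod : (2 * (n - 1) + c (n - 1)) % 2 = c (n - 1) := by omega
  simp only [bobPartner, hdiv, hmod, and_true]
  split_ifs <;> first | rfl | omega

theorem bobPartner_wrong_of_odd {i : ℕ} (hi : i % 2 = 1) (hin : i < n) :
    bobPartner n c (2 * i + (1 - c i)) = some (2 * (i - 1) + (1 - c (i - 1))) := by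
  have := hc i
  have hdiv : (2 * i + (1 - c i)) / 2 = i := by omega
  have hmod : (2 * i + (1 - c i)) % 2 = 1 - c i := by omega
  simp only [bobPartner, hdiv, hmod, and_true]
  split_ifs <;> first | rfl | omega

theorem bobPartner_wrong_of_even {i : ℕ} (hi : i % 2 = 0) (hin : i + 1 < n) :
    bobPartner n c (2 * i + (1 - c i)) = some (2 * (i + 1) + (1 - c (i + 1))) := by
  have := hc i
  have hdiv : (2 * i + (1 - c i)) / 2 = i := by omega
  have hmod : (2 * i + (1 - c i)) % 2 = 1 - c i := by omega
  simp only [bobPartner, hdiv, hmod, and_true]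
  split_ifs <;> first | rfl | omega

theorem bobPartner_wrong_last (hn : n % 2 = 1) :
    bobPartner n c (2 * (n - 1) + (1 - c (n - 1))) = some (3 * n - 1) := by
  have := hc (n - 1)
  have hdiv : (2 * (n - 1) + (1 - c (n - 1))) / 2 = n - 1 := by omega
  have hmod : (2 * (n - 1) + (1 - c (n - 1))) % 2 = 1 - c (n - 1) := by omega
  simp only [bobPartner, hdiv, hmod, and_true]
  split_ifs <;> first | rfl | omega

theorem bobPartner_last_return (hn : n % 2 = 1) :
    bobPartner n c (3 * n - 1) = some (2 * (n - 1) + (1 - c (n - 1))) := by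
  have := hc ((3 * n - 1) / 2)
  simp only [bobPartner, true_and]
  split_ifs <;> first | rfl | contradiction | omega

end Partners

section Matching

variable {n : ℕ} {c : ℕ → ℕ} (hc : ∀ i, c i ≤ 1)
include hc

theorem isPartialMatching_alicePartner : IsPartialMatching (alicePartner n c) := by
  intro v w h
  have := hc 0
  simp only [alicePartner] at h
  split_ifs at h with hv₀ hv₁ hret hbit <;> cases h
  · subst hv₀
    exact ⟨by omega, alicePartner_first⟩
  · subst hv₁
    exact ⟨by omega, alicePartner_zero⟩
  · have := hc (v - 2 * n)
    refine ⟨by omega, ?_⟩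
    rw [alicePartner_bit hc (by omega) (by omega)]
    congr 1; omega
  · have := hc ((v - 1) / 2)
    refine ⟨by omega, ?_⟩
    rw [alicePartner_return hc hbit.1 hbit.2.1]
    congr 1; omega

theorem isPartialMatching_bobPartner : IsPartialMatching (bobPartner n c) := by
  intro v w h
  simp only [bobPartner] at h
  split_ifs at h with hbit hret hwrong hodd hnext hlast <;> cases h
  · have := hc (v / 2)
    refine ⟨by omega, ?_⟩
    rw [bobPartner_return hc hbit.1]
    congr 1; omega
  · have := hc (v - 2 * n)
    refine ⟨by omega, ?_⟩
    rw [bobPartner_bit hc (by omega)]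
    congr 1; omega
  · have := hc (v / 2)
    refine ⟨by omega, ?_⟩
    rw [bobPartner_wrong_of_even hc (by omega) (by omega), Nat.sub_add_cancel (by omega)]
    congr 1; omega
  · have := hc (v / 2)
    refine ⟨by omega, ?_⟩
    rw [bobPartner_wrong_of_odd hc (by omega) hnext, Nat.add_sub_cancel]
    congr 1; omega
  · have := hc (v / 2)
    refine ⟨by omega, ?_⟩
    rw [bobPartner_last_return hc (by omega), show n - 1 = v / 2 by omega]
    congr 1; omega
  · obtain ⟨rfl, hn⟩ := hlast
    have := hc (n - 1)
    exact ⟨by omega, bobPartner_wrong_last hc hn⟩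

end Matching

section Flow

variable {n : ℕ} {cx cy : ℕ → ℕ} (hcx : ∀ i, cx i ≤ 1) (hcy : ∀ i, cy i ≤ 1)
include hcx hcy

theorem iterate_two_mul_eq_atBob (i : ℕ) (hi : i < n) (hagree : ∀ j < i, cx j = cy j) :
    (ghStep (finRestrict (3 * n + 1 + 1) (alicePartner n cx))
        (finRestrict (3 * n + 1) (bobPartner n cy)))^[2 * i]
      (ghStart (finRestrict (3 * n + 1 + 1) (alicePartner n cx))) =
      GHState.atBob ⟨2 * i + cx i, by have := hcx i; omega⟩ := by
  induction i with
  | zero =>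
    have := hcx 0
    refine ghStart_finRestrict (by omega) ?_
    rw [Nat.mul_zero, Nat.zero_add]
    exact alicePartner_zero
  | succ k ih =>
    have := hcx k
    have := hcx (k + 1)
    have hBob : bobPartner n cy (2 * k + cx k) = some (2 * n + k) := by
      rw [hagree k (by omega)]
      exact bobPartner_bit hcy (by omega)
    have hAlice : alicePartner n cx (2 * n + k + 1) = some (2 * (k + 1) + cx (k + 1) + 1) :=
      alicePartner_return hcx (by omega) hi
    conv_lhs => rw [show 2 * (k + 1) = 2 * k + 1 + 1 by ring]
    rw [Function.iterate_succ_apply',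
      Function.iterate_succ_apply', ih (by omega) (fun j hj => hagree j (by omega)),
      ghStep_atBob_finRestrict (by omega) (by omega) hBob,
      ghStep_atAlice_finRestrict (by omega) (by omega) hAlice]

theorem ghResult_eq_exitB (hcx₀ : ∀ i, n ≤ i → cx i = 0) (hagree : ∀ i < n, cx i = cy i) :
    ghResult (finRestrict (3 * n + 1 + 1) (alicePartner n cx))
      (finRestrict (3 * n + 1) (bobPartner n cy)) = GHState.exitB := by
  obtain rfl | hn := n.eq_zero_or_pos
  · have hstart : ghStart (finRestrict (3 * 0 + 1 + 1) (alicePartner 0 cx)) =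
        GHState.atBob ⟨0, by omega⟩ :=
      ghStart_finRestrict _ (by rw [alicePartner_zero, hcx₀ 0 le_rfl])
    exact ghResult_finRestrict_eq_exitB (m := 0) (by omega) _ hstart (by simp [bobPartner])
  · have hBob : bobPartner n cy (2 * (n - 1) + cx (n - 1)) = none := by
      rw [hagree (n - 1) (by omega)]
      exact bobPartner_last_bit hcy
    exact ghResult_finRestrict_eq_exitB (by omega) _
      (iterate_two_mul_eq_atBob hcx hcy (n - 1) (by omega) fun j hj => hagree j (by omega)) hBob

theorem ghResult_eq_exitA_of_first_ne_of_even {i : ℕ} (hi : i + 1 < n) (heven : i % 2 = 0)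
    (hne : cx i ≠ cy i) (hagree : ∀ j < i, cx j = cy j) :
    ghResult (finRestrict (3 * n + 1 + 1) (alicePartner n cx))
      (finRestrict (3 * n + 1) (bobPartner n cy)) = GHState.exitA := by
  have hwater := iterate_two_mul_eq_atBob hcx hcy i (Nat.lt_of_succ_lt hi) hagree
  have := hcx i
  have := hcy i
  have hBob : bobPartner n cy (2 * i + cx i) = some (2 * (i + 1) + (1 - cy (i + 1))) := by
    rw [show cx i = 1 - cy i by omega]
    exact bobPartner_wrong_of_even hcy heven hi
  by_cases hnext : cx (i + 1) = cy (i + 1)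
  · have hAlice : alicePartner n cx (2 * (i + 1) + (1 - cy (i + 1)) + 1) = none := by
      rw [← hnext]
      exact alicePartner_wrong hcx hi
    exact ghResult_finRestrict_eq_exitA (by omega) _ (by omega) hwater hBob hAlice
  · have := hcx (i + 1)
    have := hcy (i + 1)
    have hAlice : alicePartner n cx (2 * (i + 1) + (1 - cy (i + 1)) + 1) =
        some (2 * n + i + 1) := by
      rw [show 1 - cy (i + 1) = cx (i + 1) by omega]
      exact alicePartner_bit hcx (by omega) hi
    have hreturn : (ghStep (finRestrict (3 * n + 1 + 1) (alicePartner n cx))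
          (finRestrict (3 * n + 1) (bobPartner n cy)))^[2 * i + 2]
        (ghStart (finRestrict (3 * n + 1 + 1) (alicePartner n cx))) =
        GHState.atBob ⟨2 * n + i, by omega⟩ := by
      rw [Function.iterate_succ_apply', Function.iterate_succ_apply', hwater,
        ghStep_atBob_finRestrict _ (by omega) hBob, ghStep_atAlice_finRestrict _ _ hAlice]
    have hAlice' : alicePartner n cx (2 * i + cy i + 1) = none := by
      rw [show cy i = 1 - cx i by omega]
      exact alicePartner_wrong hcx (by omega)
    exact ghResult_finRestrict_eq_exitA (by omega) _ (by omega) hreturn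
      (bobPartner_return hcy hi) hAlice'

theorem ghResult_eq_exitA_of_first_ne {i : ℕ} (hi : i < n) (hne : cx i ≠ cy i)
    (hagree : ∀ j < i, cx j = cy j) :
    ghResult (finRestrict (3 * n + 1 + 1) (alicePartner n cx))
      (finRestrict (3 * n + 1) (bobPartner n cy)) = GHState.exitA := by
  have hwater := iterate_two_mul_eq_atBob hcx hcy i hi hagree
  have := hcx i
  have := hcy i
  have hxi : cx i = 1 - cy i := by omega
  rcases Nat.mod_two_eq_zero_or_one i with heven | hodd
  · by_cases hlast : i + 1 < n
    · exact ghResult_eq_exitA_of_first_ne_of_even hcx hcy hlast heven hne hagree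
    have hBob : bobPartner n cy (2 * i + cx i) = some (3 * n - 1) := by
      rw [hxi, show i = n - 1 by omega]
      exact bobPartner_wrong_last hcy (by omega)
    have hAlice : alicePartner n cx (3 * n - 1 + 1) = none := by
      rw [Nat.sub_add_cancel (by omega)]
      exact alicePartner_last_return hcx (by omega)
    exact ghResult_finRestrict_eq_exitA (by omega) _ (by omega) hwater hBob hAlice
  · have hBob : bobPartner n cy (2 * i + cx i) = some (2 * (i - 1) + (1 - cy (i - 1))) := by
      rw [hxi]
      exact bobPartner_wrong_of_odd hcy hodd hi
    have hAlice : alicePartner n cx (2 * (i - 1) + (1 - cy (i - 1)) + 1) = none := by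
      rw [← hagree (i - 1) (by omega)]
      exact alicePartner_wrong hcx (by omega)
    exact ghResult_finRestrict_eq_exitA (by omega) _ (by omega) hwater hBob hAlice

theorem ghResult_eq_exitA (hne : ∃ i < n, cx i ≠ cy i) :
    ghResult (finRestrict (3 * n + 1 + 1) (alicePartner n cx))
      (finRestrict (3 * n + 1) (bobPartner n cy)) = GHState.exitA := by
  classical
  obtain ⟨hi, hfirst⟩ := Nat.find_spec hne
  refine ghResult_eq_exitA_of_first_ne hcx hcy hi hfirst fun j hj => ?_
  exact not_not.mp (not_and.mp (Nat.find_min hne hj) (hj.trans hi))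

end Flow

def natBits (n : ℕ) (x : Fin n → Bool) : ℕ → ℕ :=
  fun i => if h : i < n then (x ⟨i, h⟩).toNat else 0

section NatBits

variable {n : ℕ}

theorem natBits_le_one (x : Fin n → Bool) (i : ℕ) : natBits n x i ≤ 1 := by
  unfold natBits
  split_ifs
  exacts [Bool.toNat_le _, zero_le_one]

theorem natBits_of_le (x : Fin n → Bool) {i : ℕ} (hi : n ≤ i) : natBits n x i = 0 := by
  simp [natBits, Nat.not_lt.mpr hi]

theorem forall_natBits_eq_iff {x y : Fin n → Bool} :
    (∀ i < n, natBits n x i = natBits n y i) ↔ x = y := by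
  refine ⟨fun h => funext fun i => ?_, fun h _ _ => h ▸ rfl⟩
  have hi := h i i.isLt
  simp only [natBits, i.isLt, dif_pos] at hi
  cases hx : x i <;> cases hy : y i <;> simp_all

end NatBits

def eqGame (n : ℕ) : GHGame n (3 * n + 1) where
  EA x := finRestrict (3 * n + 1 + 1) (alicePartner n (natBits n x))
  EB y := finRestrict (3 * n + 1) (bobPartner n (natBits n y))
  matchA x := (isPartialMatching_alicePartner (natBits_le_one x)).finRestrict
  matchB y := (isPartialMatching_bobPartner (natBits_le_one y)).finRestrict

theorem eqGame_computes (n : ℕ) : (eqGame n).Computes (EQfun n) := by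
  intro x y
  by_cases hxy : x = y
  · rw [EQfun, decide_eq_true hxy, if_pos rfl]
    exact ghResult_eq_exitB (natBits_le_one x) (natBits_le_one y) (fun _ => natBits_of_le x)
      (forall_natBits_eq_iff.mpr hxy)
  · rw [EQfun, decide_eq_false hxy, if_neg Bool.false_ne_true]
    refine ghResult_eq_exitA (natBits_le_one x) (natBits_le_one y) ?_
    by_contra! hagree
    exact hxy (forall_natBits_eq_iff.mp hagree)

/-- The equality function can be computed in the garden-hose model with
`3n + 1` pipes: `GH(EQ) ≤ 3n + 1`. -/
theorem gh_eq_upper_bound (n : ℕ) :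
    (∃ G : GHGame n (3 * n + 1), G.Computes (EQfun n)) ∧
      GH (EQfun n) ≤ 3 * n + 1 :=
  ⟨⟨eqGame n, eqGame_computes n⟩, Nat.sInf_le ⟨eqGame n, eqGame_computes n⟩⟩
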